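/- Let s = −2 and ε > 0. Then the maximal solution (α, β) of the system with initial conditions α(0) = ε, β(0) = 1 is defined on all of [0, ∞); moreover α(t) → 0 as t → ∞, and there exists β_∞ > 0 such that β(t) → β_∞ as t → ∞. (This is the ODE content of Theorem 1 in the case aλ = −2: the Berger sphere collapses to its base S² for every fiber length ε.) -/

import Mathlib

/-!
For `s = -2` one has `α' = -α·h(α, β)` with `h > 0`, `β' ≥ 0`, and `α + β/2` is non-increasing
while `α, β > 0`. Hence, as long as the solution stays in the positive quadrant, `α` decreases,
`β` increases and `(α, β)` stays in the box `(0, ε] × [1, 1 + 2ε]`. On that box `h` is bounded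
above, so `α' ≥ -Mα` gives `α(t) ≥ εe^{-Mt} > 0`: the solution never leaves the positive quadrant.
The monotone bounded trajectory has a one-sided limit at any finite endpoint, with `β ≥ 1` there,
so Picard–Lindelöf at that limit continues the solution; hence the maximal solution is global.
Finally `h ≥ 1/(4(1 + 2ε)²)` gives `α(t) ≤ εe^{-kt} → 0`, and `β`, increasing and bounded,
converges to a limit `≥ 1`.
-/

open Real Filter Set Topology
open scoped ENNReal

/-- The vector field of the spinor-flow ODE system on Berger spheres,
with parameter `s = aλ ∈ {2, -2}`. -/
noncomputable def F (s x y : ℝ) : ℝ × ℝ :=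
  (-(9/32) * x^3 / y^4 + (s/4) * x^2 / y^3 - (1/4) * x / y^2,
   (3/32) * x^2 / y^3 - (s/16) * x / y^2)

/-- `(α, β)` is a solution of the system on the set `J`, with `β` never zero. -/
def IsSolutionOn (s : ℝ) (α β : ℝ → ℝ) (J : Set ℝ) : Prop :=
  ∀ t ∈ J, β t ≠ 0 ∧
    HasDerivAt α (F s (α t) (β t)).1 t ∧
    HasDerivAt β (F s (α t) (β t)).2 t
/-- The interval `[0, T)` as a subset of `ℝ`, where `T ∈ (0,∞]`. -/
def domainUpTo (T : ℝ≥0∞) : Set ℝ := {t : ℝ | 0 ≤ t ∧ ENNReal.ofReal t < T}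

/-- `(α, β)` is a maximal solution on `[0, T)`: it is a solution there and cannot be
extended to a solution on a strictly larger interval to the right. -/
def IsMaxSolution (s : ℝ) (α β : ℝ → ℝ) (T : ℝ≥0∞) : Prop :=
  0 < T ∧ IsSolutionOn s α β (domainUpTo T) ∧
    ¬ ∃ (T' : ℝ≥0∞) (α' β' : ℝ → ℝ), T < T' ∧ IsSolutionOn s α' β' (domainUpTo T') ∧
        ∀ t ∈ domainUpTo T, α' t = α t ∧ β' t = β t

section Calculus

variable {E : Type*} [NormedAddCommGroup E] [NormedSpace ℝ E]

theorem hasDerivAt_prodMk_iff {G : Type*} [NormedAddCommGroup G] [NormedSpace ℝ G]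
    {f : ℝ → E} {g : ℝ → G} {p : E × G} {t : ℝ} :
    HasDerivAt (fun t => (f t, g t)) p t ↔ HasDerivAt f p.1 t ∧ HasDerivAt g p.2 t :=
  ⟨fun h => ⟨(ContinuousLinearMap.fst ℝ E G).hasFDerivAt.comp_hasDerivAt t h,
      (ContinuousLinearMap.snd ℝ E G).hasFDerivAt.comp_hasDerivAt t h⟩,
    fun h => h.1.prodMk h.2⟩

theorem hasDerivAt_ite_lt_of_tendsto {f g f' : ℝ → E} {a c : ℝ} {v : E} (hac : a < c)
    (hf : ∀ t ∈ Ioo a c, HasDerivAt f (f' t) t) (hfc : Tendsto f (𝓝[<] c) (𝓝 (g c)))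
    (hf'c : Tendsto f' (𝓝[<] c) (𝓝 v)) (hg : HasDerivAt g v c) :
    HasDerivAt (fun t => if t < c then f t else g t) v c := by
  set h := fun t => if t < c then f t else g t
  have hIoo : ∀ t ∈ Ioo a c, HasDerivAt h (f' t) t := fun t ht =>
    (hf t ht).congr_of_eventuallyEq <| by
      filter_upwards [Iio_mem_nhds ht.2] with u hu using if_pos hu
  have hleft : HasDerivWithinAt h v (Iic c) c := by
    refine hasDerivWithinAt_Iic_of_tendsto_deriv
      (fun t ht => (hIoo t ht).differentiableAt.differentiableWithinAt) ?_
      (Ioo_mem_nhdsLT hac) ?_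
    · rw [ContinuousWithinAt, show h c = g c from if_neg (lt_irrefl c)]
      refine (hfc.mono_left (nhdsWithin_mono _ Ioo_subset_Iio_self)).congr' ?_
      filter_upwards [self_mem_nhdsWithin] with t ht using (if_pos ht.2).symm
    · refine hf'c.congr' ?_
      filter_upwards [Ioo_mem_nhdsLT hac] with t ht using (hIoo t ht).deriv.symm
  have hright : HasDerivWithinAt h v (Ici c) c :=
    hg.hasDerivWithinAt.congr (fun t ht => if_neg (not_lt.2 ht)) (if_neg (lt_irrefl c))
  simpa only [Iic_union_Ici, hasDerivWithinAt_univ] using hleft.union hright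

theorem ContDiffAt.exists_extension_of_tendsto [CompleteSpace E] {V : E → E} {γ : ℝ → E}
    {x₀ : E} {U : Set E} {a c : ℝ} (hV : ContDiffAt ℝ 1 V x₀) (hac : a < c)
    (hγ : ∀ t ∈ Ico a c, HasDerivAt γ (V (γ t)) t) (hlim : Tendsto γ (𝓝[<] c) (𝓝 x₀))
    (hU : U ∈ 𝓝 x₀) :
    ∃ η > 0, ∃ Γ : ℝ → E, (∀ t ∈ Ico a (c + η), HasDerivAt Γ (V (Γ t)) t) ∧
      EqOn Γ γ (Ico a c) ∧ MapsTo Γ (Ico c (c + η)) U := by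
  obtain ⟨g, hg0, δ, hδ, hg⟩ :=
    hV.exists_forall_mem_closedBall_exists_eq_forall_mem_Ioo_hasDerivAt₀ c
  have hgc : ContinuousAt g c := (hg c ⟨by linarith, by linarith⟩).continuousAt
  obtain ⟨ρ, hρ, hball⟩ := Metric.mem_nhds_iff.1 (hgc.preimage_mem_nhds (hg0 ▸ hU))
  have hg' : ∀ t ∈ Ico c (c + min δ ρ), HasDerivAt g (V (g t)) t := fun t ht =>
    hg t ⟨by linarith [ht.1], by linarith [ht.2, min_le_left δ ρ]⟩
  refine ⟨min δ ρ, lt_min hδ hρ, fun t => if t < c then γ t else g t, fun t ht => ?_,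
    fun t ht => if_pos ht.2, fun t ht => ?_⟩
  · rcases lt_trichotomy t c with hlt | rfl | hgt
    · simp only [if_pos hlt]
      refine (hγ t ⟨ht.1, hlt⟩).congr_of_eventuallyEq ?_
      filter_upwards [Iio_mem_nhds hlt] with u hu using if_pos hu
    · simp only [lt_irrefl, if_false, hg0]
      exact hasDerivAt_ite_lt_of_tendsto hac (fun u hu => hγ u ⟨hu.1.le, hu.2⟩)
        (hg0 ▸ hlim) (hV.continuousAt.tendsto.comp hlim) (hg0 ▸ hg' t ⟨le_rfl, ht.2⟩)
    · simp only [if_neg hgt.not_gt]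
      refine (hg' t ⟨hgt.le, ht.2⟩).congr_of_eventuallyEq ?_
      filter_upwards [Ioi_mem_nhds hgt] with u hu using if_neg (not_lt.2 hu.le)
  · simp only [if_neg (not_lt.2 ht.1)]
    refine hball ?_
    rw [Metric.mem_ball, Real.dist_eq, abs_of_nonneg (by linarith [ht.1])]
    linarith [ht.2, min_le_right δ ρ]

end Calculus

section Comparison

variable {f f' : ℝ → ℝ} {a b : ℝ}

theorem monotoneOn_Icc_of_hasDerivAt_nonneg (hf : ∀ t ∈ Icc a b, HasDerivAt f (f' t) t)
    (hf' : ∀ t ∈ Ioo a b, 0 ≤ f' t) : MonotoneOn f (Icc a b) :=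
  monotoneOn_of_hasDerivWithinAt_nonneg (convex_Icc a b)
    (fun t ht => (hf t ht).continuousAt.continuousWithinAt)
    (fun t ht => (hf t (interior_subset ht)).hasDerivWithinAt) (by rwa [interior_Icc])

theorem antitoneOn_Icc_of_hasDerivAt_nonpos (hf : ∀ t ∈ Icc a b, HasDerivAt f (f' t) t)
    (hf' : ∀ t ∈ Ioo a b, f' t ≤ 0) : AntitoneOn f (Icc a b) :=
  antitoneOn_of_hasDerivWithinAt_nonpos (convex_Icc a b)
    (fun t ht => (hf t ht).continuousAt.continuousWithinAt)
    (fun t ht => (hf t (interior_subset ht)).hasDerivWithinAt) (by rwa [interior_Icc])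

theorem le_mul_exp_of_hasDerivAt_le_mul {K : ℝ} (hf : ∀ t ∈ Icc a b, HasDerivAt f (f' t) t)
    (hK : ∀ t ∈ Ioo a b, f' t ≤ K * f t) :
    ∀ t ∈ Icc a b, f t ≤ f a * exp (K * (t - a)) := by
  set g := fun t => f t * exp (-(K * (t - a)))
  have hg : ∀ t ∈ Icc a b, HasDerivAt g ((f' t - K * f t) * exp (-(K * (t - a)))) t := by
    intro t ht
    exact ((hf t ht).mul (((hasDerivAt_id' t).sub_const a).const_mul K).neg.exp).congr_deriv
      (by simp only [Pi.neg_apply]; ring)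
  have hanti : AntitoneOn g (Icc a b) := antitoneOn_Icc_of_hasDerivAt_nonpos hg fun t ht =>
    mul_nonpos_of_nonpos_of_nonneg (by linarith [hK t ht]) (exp_pos _).le
  intro t ht
  have hgt : g t ≤ g a := hanti (left_mem_Icc.2 (ht.1.trans ht.2)) ht ht.1
  calc f t = g t * exp (K * (t - a)) := by simp only [g, mul_assoc, ← exp_add, neg_add_cancel,
        exp_zero, mul_one]
    _ ≤ g a * exp (K * (t - a)) := by gcongr
    _ = f a * exp (K * (t - a)) := by simp [g]

theorem mul_exp_le_of_mul_le_hasDerivAt {K : ℝ} (hf : ∀ t ∈ Icc a b, HasDerivAt f (f' t) t)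
    (hK : ∀ t ∈ Ioo a b, K * f t ≤ f' t) :
    ∀ t ∈ Icc a b, f a * exp (K * (t - a)) ≤ f t := by
  intro t ht
  have := le_mul_exp_of_hasDerivAt_le_mul (f := -f) (fun t ht => (hf t ht).neg)
    (fun t ht => by simpa using hK t ht) t ht
  simpa using this

theorem ContinuousOn.exists_first_nonpos (hab : a ≤ b) (hf : ContinuousOn f (Icc a b))
    (ha : 0 < f a) (hb : f b ≤ 0) : ∃ c ∈ Ioc a b, f c ≤ 0 ∧ ∀ t ∈ Ico a c, 0 < f t := by
  set S := Icc a b ∩ f ⁻¹' Iic 0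
  have hSbdd : BddBelow S := ⟨a, fun t ht => ht.1.1⟩
  have hcS : sInf S ∈ S := (hf.preimage_isClosed_of_isClosed isClosed_Icc isClosed_Iic).csInf_mem
    ⟨b, ⟨hab, le_rfl⟩, hb⟩ hSbdd
  refine ⟨sInf S, ⟨hcS.1.1.lt_of_ne ?_, hcS.1.2⟩, hcS.2, fun t ht => ?_⟩
  · intro hac
    exact (hac ▸ ha).not_ge hcS.2
  · by_contra hft
    exact ht.2.not_ge (csInf_le hSbdd ⟨⟨ht.1, ht.2.le.trans hcS.1.2⟩, not_lt.1 hft⟩)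

end Comparison

section VectorField

variable {x y ε B : ℝ}

theorem contDiffAt_F (s : ℝ) {p : ℝ × ℝ} (hp : p.2 ≠ 0) :
    ContDiffAt ℝ 1 (fun q : ℝ × ℝ => F s q.1 q.2) p := by
  simp only [F]
  fun_prop (disch := simp [hp])

theorem fst_F_neg_two (x y : ℝ) :
    (F (-2) x y).1 = -(x * ((9/32) * x^2 / y^4 + (1/2) * x / y^3 + (1/4) / y^2)) := by
  simp only [F]; ring

theorem fst_F_nonpos (hx : 0 ≤ x) (hy : 0 < y) : (F (-2) x y).1 ≤ 0 := by
  rw [fst_F_neg_two]; exact neg_nonpos.2 (by positivity)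

theorem snd_F_nonneg (hx : 0 ≤ x) (hy : 0 < y) : 0 ≤ (F (-2) x y).2 := by
  simp only [F]
  have h : (3/32) * x^2 / y^3 - (-2/16) * x / y^2 = (3/32) * x^2 / y^3 + (1/8) * x / y^2 := by
    ring
  rw [h]; positivity

theorem fst_F_add_half_snd_nonpos (hx : 0 ≤ x) (hy : 0 < y) :
    (F (-2) x y).1 + (F (-2) x y).2 / 2 ≤ 0 := by
  have h : (F (-2) x y).1 + (F (-2) x y).2 / 2
      = -(x * ((9/32) * x^2 / y^4 + (29/64) * x / y^3 + (3/16) / y^2)) := by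
    simp only [F]; ring
  rw [h]; exact neg_nonpos.2 (by positivity)

theorem neg_mul_le_fst_F (hx : 0 ≤ x) (hxε : x ≤ ε) (hy : 1 ≤ y) :
    -((9/32) * ε^2 + (1/2) * ε + 1/4) * x ≤ (F (-2) x y).1 := by
  have hy0 : 0 < y := one_pos.trans_le hy
  have h1 : x^2 / y^4 ≤ ε^2 :=
    (div_le_self (by positivity) (one_le_pow₀ hy)).trans (pow_le_pow_left₀ hx hxε 2)
  have h2 : x / y^3 ≤ ε := (div_le_self hx (one_le_pow₀ hy)).trans hxε
  have h3 : (1/4) / y^2 ≤ 1/4 := div_le_self (by norm_num) (one_le_pow₀ hy)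
  have hsum : (9/32) * x^2 / y^4 + (1/2) * x / y^3 + (1/4) / y^2
      ≤ (9/32) * ε^2 + (1/2) * ε + 1/4 := by
    rw [mul_div_assoc, mul_div_assoc]
    gcongr
  rw [fst_F_neg_two, neg_mul, neg_le_neg_iff, mul_comm x]
  exact mul_le_mul_of_nonneg_right hsum hx

theorem fst_F_le_neg_mul (hx : 0 ≤ x) (hy : 0 < y) (hyB : y ≤ B) :
    (F (-2) x y).1 ≤ -(1 / (4 * B^2)) * x := by
  have hsum : 1 / (4 * B^2) ≤ (9/32) * x^2 / y^4 + (1/2) * x / y^3 + (1/4) / y^2 := by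
    have : 1 / (4 * B^2) ≤ (1/4) / y^2 := by
      rw [div_div]
      gcongr
    have : 0 ≤ (9/32) * x^2 / y^4 + (1/2) * x / y^3 := by positivity
    linarith
  rw [fst_F_neg_two, neg_mul, neg_le_neg_iff, mul_comm x]
  exact mul_le_mul_of_nonneg_right hsum hx

end VectorField

theorem isSolutionOn_iff {s : ℝ} {α β : ℝ → ℝ} {J : Set ℝ} :
    IsSolutionOn s α β J ↔
      ∀ t ∈ J, β t ≠ 0 ∧ HasDerivAt (fun t => (α t, β t)) (F s (α t) (β t)) t := by
  simp only [IsSolutionOn, hasDerivAt_prodMk_iff]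

theorem IsSolutionOn.mono {s : ℝ} {α β : ℝ → ℝ} {J K : Set ℝ} (h : IsSolutionOn s α β J)
    (hKJ : K ⊆ J) : IsSolutionOn s α β K :=
  fun t ht => h t (hKJ ht)

theorem Icc_subset_domainUpTo {T : ℝ≥0∞} {t : ℝ} (ht : t ∈ domainUpTo T) :
    Icc 0 t ⊆ domainUpTo T :=
  fun _ hu => ⟨hu.1, (ENNReal.ofReal_le_ofReal hu.2).trans_lt ht.2⟩

theorem domainUpTo_top : domainUpTo ⊤ = Ici 0 := by
  ext t; simp [domainUpTo]

theorem domainUpTo_of_ne_top {T : ℝ≥0∞} (hT : T ≠ ⊤) : domainUpTo T = Ico 0 T.toReal := by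
  ext t
  exact and_congr_right fun ht => ENNReal.ofReal_lt_iff_lt_toReal ht hT

namespace IsSolutionOn

variable {α β : ℝ → ℝ} {ε : ℝ}

theorem antitoneOn_monotoneOn_mem_box_Icc_of_pos {b : ℝ}
    (hsol : IsSolutionOn (-2) α β (Icc 0 b)) (hε : 0 < ε) (hα0 : α 0 = ε) (hβ0 : β 0 = 1)
    (hpos : ∀ t ∈ Ioo 0 b, 0 < α t ∧ 0 < β t) :
    AntitoneOn α (Icc 0 b) ∧ MonotoneOn β (Icc 0 b) ∧
      ∀ t ∈ Icc 0 b, (α t, β t) ∈ Ioc 0 ε ×ˢ Icc 1 (1 + 2 * ε) := by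
  have hα := fun t ht => (hsol t ht).2.1
  have hβ := fun t ht => (hsol t ht).2.2
  have hanti : AntitoneOn α (Icc 0 b) := antitoneOn_Icc_of_hasDerivAt_nonpos hα fun t ht =>
    fst_F_nonpos (hpos t ht).1.le (hpos t ht).2
  have hmono : MonotoneOn β (Icc 0 b) := monotoneOn_Icc_of_hasDerivAt_nonneg hβ fun t ht =>
    snd_F_nonneg (hpos t ht).1.le (hpos t ht).2
  have hlyap : AntitoneOn (fun t => α t + β t / 2) (Icc 0 b) :=
    antitoneOn_Icc_of_hasDerivAt_nonpos (fun t ht => (hα t ht).add ((hβ t ht).div_const 2))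
      fun t ht => fst_F_add_half_snd_nonpos (hpos t ht).1.le (hpos t ht).2
  have hbox : ∀ t ∈ Icc 0 b, α t ≤ ε ∧ 1 ≤ β t := fun t ht =>
    have h0 : (0 : ℝ) ∈ Icc 0 b := left_mem_Icc.2 (ht.1.trans ht.2)
    ⟨hα0 ▸ hanti h0 ht ht.1, hβ0 ▸ hmono h0 ht ht.1⟩
  have hlower := mul_exp_le_of_mul_le_hasDerivAt hα fun t ht =>
    neg_mul_le_fst_F (hpos t ht).1.le (hbox t (Ioo_subset_Icc_self ht)).1
      (hbox t (Ioo_subset_Icc_self ht)).2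
  refine ⟨hanti, hmono, fun t ht => ?_⟩
  have hαt : 0 < α t := by
    have := hlower t ht
    rw [hα0] at this
    exact (mul_pos hε (exp_pos _)).trans_le this
  have := hlyap (left_mem_Icc.2 (ht.1.trans ht.2)) ht ht.1
  simp only [hα0, hβ0] at this
  exact ⟨⟨hαt, (hbox t ht).1⟩, (hbox t ht).2, by linarith⟩

theorem antitoneOn_monotoneOn_mem_box_Icc {b : ℝ}
    (hsol : IsSolutionOn (-2) α β (Icc 0 b)) (hε : 0 < ε) (hα0 : α 0 = ε) (hβ0 : β 0 = 1) :
    AntitoneOn α (Icc 0 b) ∧ MonotoneOn β (Icc 0 b) ∧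
      ∀ t ∈ Icc 0 b, (α t, β t) ∈ Ioc 0 ε ×ˢ Icc 1 (1 + 2 * ε) := by
  refine hsol.antitoneOn_monotoneOn_mem_box_Icc_of_pos hε hα0 hβ0 fun t ht => ?_
  rw [← lt_min_iff]
  by_contra hneg
  have hsub : Icc 0 t ⊆ Icc 0 b := Icc_subset_Icc_right ht.2.le
  have hcont : ContinuousOn (fun u => min (α u) (β u)) (Icc 0 t) :=
    ContinuousOn.inf (fun u hu => (hsol u (hsub hu)).2.1.continuousAt.continuousWithinAt)
      (fun u hu => (hsol u (hsub hu)).2.2.continuousAt.continuousWithinAt)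
  obtain ⟨c, hc, hc0, hbefore⟩ :=
    hcont.exists_first_nonpos ht.1.le (by simp [hα0, hβ0, hε]) (not_lt.1 hneg)
  obtain ⟨-, -, hbox⟩ :=
    (hsol.mono ((Icc_subset_Icc_right hc.2).trans hsub)).antitoneOn_monotoneOn_mem_box_Icc_of_pos
      hε hα0 hβ0 fun u hu => lt_min_iff.1 (hbefore u (Ioo_subset_Ico_self hu))
  obtain ⟨⟨hαc, -⟩, hβc, -⟩ := hbox c (right_mem_Icc.2 hc.1.le)
  exact hc0.not_gt (lt_min hαc (by linarith))

theorem antitoneOn_monotoneOn_mem_box {T : ℝ≥0∞}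
    (hsol : IsSolutionOn (-2) α β (domainUpTo T)) (hε : 0 < ε) (hα0 : α 0 = ε) (hβ0 : β 0 = 1) :
    AntitoneOn α (domainUpTo T) ∧ MonotoneOn β (domainUpTo T) ∧
      ∀ t ∈ domainUpTo T, (α t, β t) ∈ Ioc 0 ε ×ˢ Icc 1 (1 + 2 * ε) := by
  have key := fun t (ht : t ∈ domainUpTo T) =>
    (hsol.mono (Icc_subset_domainUpTo ht)).antitoneOn_monotoneOn_mem_box_Icc hε hα0 hβ0
  exact ⟨fun t ht u hu htu => (key u hu).1 ⟨ht.1, htu⟩ (right_mem_Icc.2 hu.1) htu,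
    fun t ht u hu htu => (key u hu).2.1 ⟨ht.1, htu⟩ (right_mem_Icc.2 hu.1) htu,
    fun t ht => (key t ht).2.2 t (right_mem_Icc.2 ht.1)⟩

theorem exists_extension_of_ne_top {T : ℝ≥0∞} (hT0 : 0 < T) (hT : T ≠ ⊤)
    (hsol : IsSolutionOn (-2) α β (domainUpTo T)) (hε : 0 < ε) (hα0 : α 0 = ε)
    (hβ0 : β 0 = 1) :
    ∃ (T' : ℝ≥0∞) (α' β' : ℝ → ℝ), T < T' ∧ IsSolutionOn (-2) α' β' (domainUpTo T') ∧
      ∀ t ∈ domainUpTo T, α' t = α t ∧ β' t = β t := by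
  obtain ⟨hanti, hmono, hbox⟩ := hsol.antitoneOn_monotoneOn_mem_box hε hα0 hβ0
  rw [domainUpTo_of_ne_top hT] at hsol hanti hmono hbox ⊢
  set c := T.toReal
  have hc : 0 < c := ENNReal.toReal_pos hT0.ne' hT
  have hαlim := (hanti.mono Ioo_subset_Ico_self).tendsto_nhdsWithin_Ioo_left (nonempty_Ioo.2 hc)
    ⟨0, by rintro _ ⟨t, ht, rfl⟩; exact (hbox t (Ioo_subset_Ico_self ht)).1.1.le⟩
  have hβlim := (hmono.mono Ioo_subset_Ico_self).tendsto_nhdsWithin_Ioo_left (nonempty_Ioo.2 hc)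
    ⟨1 + 2 * ε, by rintro _ ⟨t, ht, rfl⟩; exact (hbox t (Ioo_subset_Ico_self ht)).2.2⟩
  have hβc : 1 ≤ sSup (β '' Ioo 0 c) := ge_of_tendsto hβlim <| by
    filter_upwards [Ioo_mem_nhdsLT hc] with t ht using (hbox t (Ioo_subset_Ico_self ht)).2.1
  have hβc' : sSup (β '' Ioo 0 c) ≠ 0 := (one_pos.trans_le hβc).ne'
  have hU : {p : ℝ × ℝ | p.2 ≠ 0} ∈ 𝓝 (sInf (α '' Ioo 0 c), sSup (β '' Ioo 0 c)) :=
    (isOpen_ne_fun continuous_snd continuous_const).mem_nhds hβc'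
  obtain ⟨η, hη, Γ, hΓ, hΓγ, hΓU⟩ :=
    (contDiffAt_F (-2) (p := (sInf (α '' Ioo 0 c), _)) hβc').exists_extension_of_tendsto hc
    (fun t ht => hasDerivAt_prodMk_iff.2 ⟨(hsol t ht).2.1, (hsol t ht).2.2⟩)
    (hαlim.prodMk_nhds hβlim) hU
  refine ⟨ENNReal.ofReal (c + η), fun t => (Γ t).1, fun t => (Γ t).2, ?_, ?_,
    fun t ht => Prod.ext_iff.1 (hΓγ ht)⟩
  · rw [← ENNReal.ofReal_toReal hT]
    exact (ENNReal.ofReal_lt_ofReal_iff (by linarith)).2 (by linarith)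
  · rw [domainUpTo_of_ne_top ENNReal.ofReal_ne_top, ENNReal.toReal_ofReal (by linarith),
      isSolutionOn_iff]
    refine fun t ht => ⟨?_, hΓ t ht⟩
    rcases lt_or_ge t c with htc | htc
    · simpa only [hΓγ ⟨ht.1, htc⟩] using (hsol t ⟨ht.1, htc⟩).1
    · exact hΓU ⟨htc, ht.2⟩

theorem tendsto_fst_atTop (hsol : IsSolutionOn (-2) α β (domainUpTo ⊤)) (hε : 0 < ε)
    (hα0 : α 0 = ε) (hβ0 : β 0 = 1) : Tendsto α atTop (𝓝 0) := by
  obtain ⟨-, -, hbox⟩ := hsol.antitoneOn_monotoneOn_mem_box hε hα0 hβ0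
  rw [domainUpTo_top] at hsol hbox
  set k := 1 / (4 * (1 + 2 * ε) ^ 2)
  have hk : 0 < k := by positivity
  have hupper : ∀ t, 0 ≤ t → α t ≤ ε * exp (-k * t) := fun t ht => by
    have := le_mul_exp_of_hasDerivAt_le_mul (fun u hu => (hsol u hu.1).2.1)
      (fun u hu => fst_F_le_neg_mul (hbox u hu.1.le).1.1.le (one_pos.trans_le (hbox u hu.1.le).2.1)
        (hbox u hu.1.le).2.2) t ⟨ht, le_rfl⟩
    simpa only [hα0, sub_zero] using this
  have hexp : Tendsto (fun t => ε * exp (-k * t)) atTop (𝓝 0) := by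
    have := tendsto_exp_atBot.comp (tendsto_id.const_mul_atTop_of_neg (neg_lt_zero.2 hk))
    simpa using this.const_mul ε
  refine tendsto_of_tendsto_of_tendsto_of_le_of_le' tendsto_const_nhds hexp ?_ ?_
  · filter_upwards [eventually_ge_atTop 0] with t ht using (hbox t ht).1.1.le
  · filter_upwards [eventually_ge_atTop 0] with t ht using hupper t ht

theorem exists_tendsto_snd_atTop (hsol : IsSolutionOn (-2) α β (domainUpTo ⊤)) (hε : 0 < ε)
    (hα0 : α 0 = ε) (hβ0 : β 0 = 1) : ∃ βinf : ℝ, 0 < βinf ∧ Tendsto β atTop (𝓝 βinf) := by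
  obtain ⟨-, hmono, hbox⟩ := hsol.antitoneOn_monotoneOn_mem_box hε hα0 hβ0
  rw [domainUpTo_top] at hmono hbox
  have hmono' : Monotone fun t : Ici (0 : ℝ) => β t := fun t u htu => hmono t.2 u.2 htu
  have hbdd : BddAbove (range fun t : Ici (0 : ℝ) => β t) :=
    ⟨1 + 2 * ε, by rintro _ ⟨t, rfl⟩; exact (hbox t t.2).2.2⟩
  refine ⟨_, one_pos.trans_le ((hbox 0 self_mem_Ici).2.1.trans (le_ciSup hbdd ⟨0, self_mem_Ici⟩)),
    ?_⟩
  exact tendsto_comp_val_Ici_atTop.1 (tendsto_atTop_ciSup hmono' hbdd)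

end IsSolutionOn

theorem collapse_s_neg_two (ε : ℝ) (hε : 0 < ε) (α β : ℝ → ℝ) (T : ℝ≥0∞)
    (hmax : IsMaxSolution (-2) α β T) (hα0 : α 0 = ε) (hβ0 : β 0 = 1) :
    T = ⊤ ∧ Tendsto α atTop (𝓝 0) ∧
      ∃ βinf : ℝ, 0 < βinf ∧ Tendsto β atTop (𝓝 βinf) := by
  obtain ⟨hT0, hsol, hmaximal⟩ := hmax
  obtain rfl : T = ⊤ := by
    by_contra hT
    exact hmaximal (hsol.exists_extension_of_ne_top hT0 hT hε hα0 hβ0)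
  exact ⟨rfl, hsol.tendsto_fst_atTop hε hα0 hβ0, hsol.exists_tendsto_snd_atTop hε hα0 hβ0⟩
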